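/- arXiv:2107.00539 — 2 statements merged into one kernel-verified Lean document; each statement's English description precedes it below -/
import Mathlib

section
/- For every positive integer k, ∫_ℝ ∫_ℝ (y − x)^{2k} π₁(y) π₂(x) dx dy ≤ (2k)! / (k! λ^k). -/
/-!
Expanding `(y - x) ^ (2k)` binomially writes the double integral as
`∑ₘ (-1)ᵐ C(2k, m) M₁(m) M₂(2k - m)`, where `Mᵢ(m) = ∫ yᵐ πᵢ(y) dy`. The odd moments of the even
density `π₁` vanish, and bounding the even ones by the Gaussian moments `(2j - 1)‼ / λʲ` leaves
`∑ⱼ C(2k, 2j) (2j - 1)‼ (2k - 2j - 1)‼ / λᵏ = 2ᵏ (2k - 1)‼ / λᵏ = (2k)! / (k! λᵏ)`,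
the `2k`-th moment of the difference of two independent `N(0, 1/λ)` variables.

If a `2k`-th moment is infinite the Bochner double integral is `0`: either every inner integral
diverges, or `∫ (y - x) ^ (2k) π₂(x) dx ≥ 2 ^ (1 - 2k) y ^ (2k) - M₂(2k)` makes the outer
one diverge.
-/

open MeasureTheory Real Finset
open scoped Nat

theorem Nat.factorial_two_mul_eq (n : ℕ) : (2 * n)! = 2 ^ n * n ! * (2 * n - 1)‼ := by
  rcases n with _ | n
  · rfl
  · rw [show 2 * (n + 1) = 2 * n + 1 + 1 by ring, Nat.factorial_eq_mul_doubleFactorial,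
      show 2 * n + 1 + 1 = 2 * (n + 1) by ring, Nat.doubleFactorial_two_mul]
    rfl

theorem cast_choose_two_mul_mul_doubleFactorial {k j : ℕ} (hj : j ≤ k) :
    ((2 * k).choose (2 * j) : ℝ) * (2 * j - 1)‼ * (2 * (k - j) - 1)‼
      = k.choose j * (2 * k)! / (2 ^ k * k !) := by
  have h2 : 2 * j ≤ 2 * k := by omega
  rw [Nat.cast_choose ℝ h2, Nat.cast_choose ℝ hj, show 2 * k - 2 * j = 2 * (k - j) by omega]
  simp only [Nat.factorial_two_mul_eq, Nat.cast_mul, Nat.cast_pow, Nat.cast_ofNat]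
  rw [← Nat.sub_add_cancel hj]
  simp only [Nat.add_sub_cancel, pow_add]
  field_simp

theorem sum_choose_two_mul_doubleFactorial_div_pow {lam : ℝ} (hlam : lam ≠ 0) (k : ℕ) :
    ∑ j ∈ range (k + 1), ((2 * k).choose (2 * j) : ℝ) * ((2 * j - 1)‼ / lam ^ j)
        * ((2 * (k - j) - 1)‼ / lam ^ (k - j))
      = (2 * k)! / (k ! * lam ^ k) := by
  calc _ = ∑ j ∈ range (k + 1), (k.choose j : ℝ) * ((2 * k)! / (2 ^ k * k ! * lam ^ k)) := by
        refine sum_congr rfl fun j hj => ?_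
        have hjk : j ≤ k := Nat.lt_succ_iff.mp (mem_range.mp hj)
        have hpow : lam ^ k = lam ^ j * lam ^ (k - j) := by rw [← pow_add, Nat.add_sub_cancel' hjk]
        calc _ = ((2 * k).choose (2 * j) : ℝ) * (2 * j - 1)‼ * (2 * (k - j) - 1)‼ / lam ^ k := by
              rw [hpow]; ring
          _ = _ := by rw [cast_choose_two_mul_mul_doubleFactorial hjk]; ring
    _ = (2 * k)! / (k ! * lam ^ k) := by
        rw [← sum_mul, ← Nat.cast_sum, Nat.sum_range_choose]
        push_cast
        field_simp

theorem Finset.sum_range_two_mul_add_one_of_odd {M : Type*} [AddCommMonoid M] {f : ℕ → M}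
    (hf : ∀ m, Odd m → f m = 0) (k : ℕ) :
    ∑ m ∈ range (2 * k + 1), f m = ∑ j ∈ range (k + 1), f (2 * j) := by
  induction k with
  | zero => simp
  | succ k ih =>
    rw [show 2 * (k + 1) + 1 = 2 * k + 1 + 1 + 1 by ring, sum_range_succ, sum_range_succ, ih,
      hf _ (odd_two_mul_add_one k), add_zero, sum_range_succ (n := k + 1)]
    rfl

theorem sum_choose_mul_moments_le {lam : ℝ} (hlam : 0 < lam) {k : ℕ} {M N : ℕ → ℝ}
    (hM_odd : ∀ m, Odd m → M m = 0) (hN_nonneg : ∀ j, 0 ≤ N (2 * j))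
    (hM : ∀ j ≤ k, M (2 * j) ≤ (2 * j - 1)‼ / lam ^ j)
    (hN : ∀ j ≤ k, N (2 * j) ≤ (2 * j - 1)‼ / lam ^ j) :
    ∑ m ∈ range (2 * k + 1), (-1) ^ (m + 2 * k) * ((2 * k).choose m : ℝ) * M m * N (2 * k - m)
      ≤ (2 * k)! / (k ! * lam ^ k) := by
  rw [sum_range_two_mul_add_one_of_odd (fun m hm => by simp [hM_odd m hm]),
    ← sum_choose_two_mul_doubleFactorial_div_pow hlam.ne']
  refine sum_le_sum fun j hj => ?_
  have hjk : j ≤ k := Nat.lt_succ_iff.mp (mem_range.mp hj)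
  rw [← mul_add, (even_two_mul (j + k)).neg_one_pow, one_mul, ← Nat.mul_sub]
  gcongr
  exacts [hN_nonneg _, hM j hjk, hN (k - j) (Nat.sub_le k j)]

theorem Function.Odd.integral_eq_zero {G E : Type*} [MeasurableSpace G] [AddGroup G]
    [MeasurableNeg G] [NormedAddCommGroup E] [NormedSpace ℝ E] {μ : Measure G} [μ.IsNegInvariant]
    {f : G → E} (hf : f.Odd) : ∫ x, f x ∂μ = 0 := by
  have h := integral_neg_eq_self f μ
  simp only [hf _, integral_neg] at h
  rw [neg_eq_iff_add_eq_zero, ← two_smul ℝ] at h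
  simpa using h

theorem Even.sub_pow_le {R : Type*} [Ring R] [LinearOrder R] [IsStrictOrderedRing R] {n : ℕ}
    (hn : Even n) (a b : R) : (a - b) ^ n ≤ 2 ^ (n - 1) * (a ^ n + b ^ n) := by
  rw [← hn.pow_abs, ← hn.pow_abs a, ← hn.pow_abs b]
  calc |a - b| ^ n ≤ (|a| + |b|) ^ n := by gcongr; exact abs_sub _ _
    _ ≤ _ := add_pow_le (abs_nonneg a) (abs_nonneg b) n

theorem integral_pow_mul_eq_zero_of_odd {p : ℝ → ℝ} (hp : p.Even) {m : ℕ} (hm : Odd m) :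
    ∫ x, x ^ m * p x = 0 :=
  Function.Odd.integral_eq_zero fun x => by simp [hp x, hm.neg_pow]

section Density

variable {p q : ℝ → ℝ} {n : ℕ}

theorem integrable_mul_of_abs_le {f g : ℝ → ℝ} (hf : Continuous f) (hq : Integrable q)
    (hq0 : 0 ≤ q) (hfg : ∀ x, |f x| ≤ g x) (hg : Integrable fun x => g x * q x) :
    Integrable fun x => f x * q x :=
  hg.mono' (hf.aestronglyMeasurable.mul hq.1) <| ae_of_all _ fun x => by
    rw [norm_mul, norm_eq_abs, norm_eq_abs, abs_of_nonneg (hq0 x)]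
    exact mul_le_mul_of_nonneg_right (hfg x) (hq0 x)

theorem integrable_pow_mul_of_le (hq : Integrable q) (hq0 : 0 ≤ q) (hn : Even n)
    (hqn : Integrable fun x => x ^ n * q x) {m : ℕ} (hm : m ≤ n) :
    Integrable fun x => x ^ m * q x := by
  refine integrable_mul_of_abs_le (continuous_pow m) hq hq0 (g := fun x => 1 + x ^ n)
    (fun x => ?_) (by simpa only [Pi.add_def, add_mul, one_mul] using hq.add hqn)
  rw [abs_pow, ← hn.pow_abs]
  rcases le_total |x| 1 with h | h
  · exact (pow_le_one₀ (abs_nonneg x) h).trans (le_add_of_nonneg_right (by positivity))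
  · exact (pow_le_pow_right₀ h hm).trans (le_add_of_nonneg_left zero_le_one)

theorem integrable_sub_pow_mul {u : ℝ → ℝ} (hu : Continuous u) (hq : Integrable q) (hq0 : 0 ≤ q)
    (hn : Even n) (hqu : Integrable fun x => u x ^ n * q x) (c : ℝ) :
    Integrable fun x => (c - u x) ^ n * q x := by
  refine integrable_mul_of_abs_le ((continuous_const.sub hu).pow n) hq hq0
    (g := fun x => 2 ^ (n - 1) * (c ^ n + u x ^ n)) (fun x => ?_) ?_
  · rw [abs_of_nonneg (hn.pow_nonneg _)]
    exact hn.sub_pow_le c (u x)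
  · simpa only [Pi.add_def, mul_add, add_mul, mul_assoc] using
      ((hq.const_mul (c ^ n)).add hqu).const_mul (2 ^ (n - 1))

theorem integrable_sub_pow_mul_iff (hq : Integrable q) (hq0 : 0 ≤ q) (hn : Even n) (y : ℝ) :
    (Integrable fun x => (y - x) ^ n * q x) ↔ Integrable fun x => x ^ n * q x :=
  ⟨fun h => by simpa using integrable_sub_pow_mul (u := fun x => y - x) (by fun_prop) hq hq0 hn h y,
    fun h => integrable_sub_pow_mul continuous_id hq hq0 hn h y⟩

theorem integral_integral_sub_pow_mul_mul (hp : Integrable p) (hp0 : 0 ≤ p) (hq : Integrable q)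
    (hq0 : 0 ≤ q) (hn : Even n) (hpn : Integrable fun y => y ^ n * p y)
    (hqn : Integrable fun x => x ^ n * q x) :
    ∫ y, ∫ x, (y - x) ^ n * p y * q x
      = ∑ m ∈ range (n + 1),
          (-1) ^ (m + n) * (n.choose m : ℝ) * (∫ y, y ^ m * p y) * ∫ x, x ^ (n - m) * q x := by
  have expand : ∀ y x, (y - x) ^ n * p y * q x = ∑ m ∈ range (n + 1),
      (-1) ^ (m + n) * (n.choose m : ℝ) * (y ^ m * p y) * (x ^ (n - m) * q x) := by
    intro y x
    rw [sub_pow, sum_mul, sum_mul]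
    exact sum_congr rfl fun m _ => by ring
  simp_rw [expand]
  calc _ = ∫ y, ∑ m ∈ range (n + 1),
        (-1) ^ (m + n) * (n.choose m : ℝ) * (∫ x, x ^ (n - m) * q x) * (y ^ m * p y) := by
        congr 1 with y
        rw [integral_finsetSum _ fun m _ =>
          (integrable_pow_mul_of_le hq hq0 hn hqn (Nat.sub_le n m)).const_mul _]
        exact sum_congr rfl fun m _ => by rw [integral_const_mul]; ring
    _ = _ := by
        rw [integral_finsetSum _ fun m hm => (integrable_pow_mul_of_le hp hp0 hn hpn
          (Nat.lt_succ_iff.mp (mem_range.mp hm))).const_mul _]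
        exact sum_congr rfl fun m _ => by rw [integral_const_mul]; ring

theorem pow_le_integral_sub_pow_mul (hq : Integrable q) (hq0 : 0 ≤ q) (hq1 : ∫ x, q x = 1)
    (hn : Even n) (hqn : Integrable fun x => x ^ n * q x) (y : ℝ) :
    y ^ n ≤ 2 ^ (n - 1) * ((∫ x, (y - x) ^ n * q x) + ∫ x, x ^ n * q x) := by
  have hsub := (integrable_sub_pow_mul_iff hq hq0 hn y).mpr hqn
  calc y ^ n = ∫ x, y ^ n * q x := by rw [integral_const_mul, hq1, mul_one]
    _ ≤ ∫ x, 2 ^ (n - 1) * ((y - x) ^ n * q x + x ^ n * q x) := by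
        refine integral_mono (hq.const_mul _) ((hsub.add hqn).const_mul _) fun x => ?_
        have h := hn.sub_pow_le (y - x) (-x)
        rw [sub_neg_eq_add, sub_add_cancel, hn.neg_pow] at h
        simpa only [← mul_add, ← mul_assoc, ← add_mul] using
          mul_le_mul_of_nonneg_right h (hq0 x)
    _ = _ := by rw [integral_const_mul, integral_add hsub hqn]

theorem integral_integral_sub_pow_mul_mul_of_not_integrable (hp : Integrable p) (hp0 : 0 ≤ p)
    (hq : Integrable q) (hq0 : 0 ≤ q) (hq1 : ∫ x, q x = 1) (hn : Even n)
    (h : ¬((Integrable fun y => y ^ n * p y) ∧ Integrable fun x => x ^ n * q x)) :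
    ∫ y, ∫ x, (y - x) ^ n * p y * q x = 0 := by
  simp_rw [mul_right_comm _ (p _), integral_mul_const]
  by_cases hqn : Integrable fun x => x ^ n * q x
  · refine integral_undef fun hF => h ⟨?_, hqn⟩
    refine integrable_mul_of_abs_le (continuous_pow n) hp hp0
      (g := fun y => 2 ^ (n - 1) * ((∫ x, (y - x) ^ n * q x) + ∫ x, x ^ n * q x)) (fun y => ?_) ?_
    · rw [abs_of_nonneg (hn.pow_nonneg y)]
      exact pow_le_integral_sub_pow_mul hq hq0 hq1 hn hqn y
    · simpa only [Pi.add_def, mul_assoc, add_mul] using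
        (hF.add (hp.const_mul (∫ x, x ^ n * q x))).const_mul (2 ^ (n - 1))
  · have hG : ∀ y, ∫ x, (y - x) ^ n * q x = 0 := fun y =>
      integral_undef ((integrable_sub_pow_mul_iff hq hq0 hn y).not.mpr hqn)
    simp [hG]

end Density

theorem even_moment_le_of_integral_eq_one {p : ℝ → ℝ} {lam : ℝ} {k : ℕ} (hp1 : ∫ x, p x = 1)
    (hmom : ∀ j, 1 ≤ j → j ≤ k → ∫ x, x ^ (2 * j) * p x ≤ (2 * j - 1)‼ / lam ^ j) {j : ℕ}
    (hj : j ≤ k) : ∫ x, x ^ (2 * j) * p x ≤ (2 * j - 1)‼ / lam ^ j := by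
  rcases j with _ | j
  · simp [hp1] -- `(2 * 0 - 1)‼ = 0‼ = 1`: the case `j = 0` is the normalization of `p`.
  · exact hmom _ j.succ_pos hj

theorem double_integral_even_power_bound_general
    (lam : ℝ) (hlam : 0 < lam) (k : ℕ)
    (p₁ p₂ : ℝ → ℝ)
    (hp₁nonneg : ∀ y, 0 ≤ p₁ y) (hp₂nonneg : ∀ y, 0 ≤ p₂ y)
    (hp₁int : ∫ y, p₁ y = 1) (hp₂int : ∫ y, p₂ y = 1)
    (hp₁even : ∀ y, p₁ (-y) = p₁ y)
    (hmom₁ : ∀ j, 1 ≤ j → j ≤ k →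
      ∫ y, y ^ (2 * j) * p₁ y ≤ (Nat.doubleFactorial (2 * j - 1) : ℝ) / lam ^ j)
    (hmom₂ : ∀ j, 1 ≤ j → j ≤ k →
      ∫ y, y ^ (2 * j) * p₂ y ≤ (Nat.doubleFactorial (2 * j - 1) : ℝ) / lam ^ j) :
    ∫ y, ∫ x, (y - x) ^ (2 * k) * p₁ y * p₂ x
      ≤ ((2 * k).factorial : ℝ) / ((k.factorial : ℝ) * lam ^ k) := by
  have hp₁ : Integrable p₁ := .of_integral_ne_zero (by simp [hp₁int])
  have hp₂ : Integrable p₂ := .of_integral_ne_zero (by simp [hp₂int])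
  by_cases hmom : (Integrable fun y => y ^ (2 * k) * p₁ y) ∧ Integrable fun x => x ^ (2 * k) * p₂ x
  · rw [integral_integral_sub_pow_mul_mul hp₁ hp₁nonneg hp₂ hp₂nonneg (even_two_mul k)
      hmom.1 hmom.2]
    exact sum_choose_mul_moments_le (N := fun m => ∫ x, x ^ m * p₂ x) hlam
      (fun _ => integral_pow_mul_eq_zero_of_odd hp₁even)
      (fun j => integral_nonneg fun x => mul_nonneg ((even_two_mul j).pow_nonneg x) (hp₂nonneg x))
      (fun _ => even_moment_le_of_integral_eq_one hp₁int hmom₁)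
      (fun _ => even_moment_le_of_integral_eq_one hp₂int hmom₂)
  · rw [integral_integral_sub_pow_mul_mul_of_not_integrable hp₁ hp₁nonneg hp₂ hp₂nonneg hp₂int
      (even_two_mul k) hmom]
    positivity

theorem double_integral_even_power_bound
    (lam : ℝ) (hlam : 0 < lam) (k : ℕ) (hk : 1 ≤ k)
    (p₁ p₂ : ℝ → ℝ) (hp₁meas : Measurable p₁) (hp₂meas : Measurable p₂)
    (hp₁nonneg : ∀ y, 0 ≤ p₁ y) (hp₂nonneg : ∀ y, 0 ≤ p₂ y)
    (hp₁int : ∫ y, p₁ y = 1) (hp₂int : ∫ y, p₂ y = 1)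
    (hp₁even : ∀ y, p₁ (-y) = p₁ y) (hp₂even : ∀ y, p₂ (-y) = p₂ y)
    (hmom₁ : ∀ j, 1 ≤ j → j ≤ k →
      ∫ y, y ^ (2 * j) * p₁ y ≤ (Nat.doubleFactorial (2 * j - 1) : ℝ) / lam ^ j)
    (hmom₂ : ∀ j, 1 ≤ j → j ≤ k →
      ∫ y, y ^ (2 * j) * p₂ y ≤ (Nat.doubleFactorial (2 * j - 1) : ℝ) / lam ^ j) :
    ∫ y, ∫ x, (y - x) ^ (2 * k) * p₁ y * p₂ x
      ≤ ((2 * k).factorial : ℝ) / ((k.factorial : ℝ) * lam ^ k) :=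
  double_integral_even_power_bound_general lam hlam k p₁ p₂ hp₁nonneg hp₂nonneg hp₁int hp₂int
    hp₁even hmom₁ hmom₂
end

section
/- For every y ∈ ℝ, |(φ' ⋆ π)(y)| ≤ 2 Σ_{j=1}^{J₁} j |α_j| |y|^{2j−1} + Σ_{J₁ < j ≤ J} θ_j |α_j| + ‖β'‖_∞; in particular the logarithmic derivative l(y) = π'(y)/π(y) = −(φ' ⋆ π)(y) satisfies the same bound. -/
open MeasureTheory Real Finset

/-!
Since `p` is even, its odd moments and its sine moments vanish. Expanding `(y - x) ^ (2 * k)`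
binomially and `cos (θ * (y - x))` by the addition formula therefore gives
`φ ⋆ p = c + ∑ α_j φ_j + β ⋆ p` for a constant `c`. As `φ'` grows at most polynomially and `p` has
all moments, one may differentiate under the integral sign, so
`φ' ⋆ p = ∑ α_j φ_j' + β' ⋆ p`, which is bounded term by term. Differentiating the fixed-point
equation `p = Z⁻¹ * exp (-(φ ⋆ p))` gives `p' / p = -(φ' ⋆ p)`.
-/

theorem integral_eq_zero_of_odd {G : Type*} [MeasurableSpace G] [AddGroup G] [MeasurableNeg G]
    {μ : Measure G} [μ.IsNegInvariant] {f : G → ℝ} (hf : ∀ x, f (-x) = -f x) :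
    ∫ x, f x ∂μ = 0 := by
  have h := integral_neg_eq_self f μ
  simp only [hf, integral_neg] at h
  linarith

theorem Finset.sum_range_two_mul_add_one_of_odd_eq_zero {M : Type*} [AddCommMonoid M]
    (f : ℕ → M) (k : ℕ) (hf : ∀ i < k, f (2 * i + 1) = 0) :
    ∑ i ∈ range (2 * k + 1), f i = ∑ i ∈ range (k + 1), f (2 * i) := by
  induction k with
  | zero => simp
  | succ k ih =>
    rw [sum_range_succ (n := k + 1), ← ih fun i hi => hf i (by omega),
      show 2 * (k + 1) + 1 = 2 * k + 1 + 1 + 1 by ring, sum_range_succ, sum_range_succ,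
      hf k (by omega), add_zero, mul_add, mul_one]

section Moments

variable {p : ℝ → ℝ}

theorem integrable_eval_mul (hmom : ∀ k : ℕ, Integrable (fun x => x ^ k * p x))
    (P : Polynomial ℝ) : Integrable (fun x => P.eval x * p x) := by
  simp_rw [Polynomial.eval_eq_sum_range, sum_mul, mul_assoc]
  exact integrable_finsetSum _ fun i _ => (hmom i).const_mul _

theorem integrable_sub_pow_mul_s17 (hmom : ∀ k : ℕ, Integrable (fun x => x ^ k * p x)) (y : ℝ)
    (n : ℕ) : Integrable (fun x => (y - x) ^ n * p x) := by
  have h := integrable_eval_mul hmom ((Polynomial.C y - Polynomial.X) ^ n)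
  simpa using h

theorem integrable_one_add_sub_sq_pow_mul (hmom : ∀ k : ℕ, Integrable (fun x => x ^ k * p x))
    (y : ℝ) (n : ℕ) : Integrable (fun x => (1 + (y - x) ^ 2) ^ n * p x) := by
  have h := integrable_eval_mul hmom ((1 + (Polynomial.C y - Polynomial.X) ^ 2) ^ n)
  simpa using h

theorem integral_pow_mul_eq_zero_of_odd_s17 (hpeven : ∀ x, p (-x) = p x) {n : ℕ} (hn : Odd n) :
    ∫ x, x ^ n * p x = 0 :=
  integral_eq_zero_of_odd fun x => by rw [hpeven, hn.neg_pow, neg_mul]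

theorem integral_sub_pow_two_mul_mul (hpeven : ∀ x, p (-x) = p x)
    (hmom : ∀ k : ℕ, Integrable (fun x => x ^ k * p x)) (y : ℝ) (k : ℕ) :
    ∫ x, (y - x) ^ (2 * k) * p x
      = ∑ i ∈ range (k + 1),
          (2 * k).choose (2 * i) * (∫ x, x ^ (2 * (k - i)) * p x) * y ^ (2 * i) := by
  have hexp : ∀ x, (y - x) ^ (2 * k) * p x = ∑ i ∈ range (2 * k + 1),
      (-1) ^ (i + 2 * k) * y ^ i * (2 * k).choose i * (x ^ (2 * k - i) * p x) := fun x => by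
    rw [sub_pow, sum_mul]
    exact sum_congr rfl fun i _ => by ring
  simp_rw [hexp]
  rw [integral_finsetSum _ fun i _ => (hmom _).const_mul _]
  simp_rw [integral_const_mul]
  rw [sum_range_two_mul_add_one_of_odd_eq_zero _ _ fun i hi => by
    rw [integral_pow_mul_eq_zero_of_odd_s17 hpeven ⟨k - i - 1, by omega⟩, mul_zero]]
  refine sum_congr rfl fun i _ => ?_
  rw [show 2 * k - 2 * i = 2 * (k - i) by omega, ← mul_add, pow_mul, neg_one_sq, one_pow]
  ring

theorem integrable_comp_sub_mul_of_bounded (hp : Integrable p) {g : ℝ → ℝ} (hg : Measurable g)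
    {C : ℝ} (hgC : ∀ z, |g z| ≤ C) (y : ℝ) : Integrable (fun x => g (y - x) * p x) :=
  hp.bdd_mul (hg.comp (measurable_const.sub measurable_id)).aestronglyMeasurable
    (.of_forall fun x => hgC (y - x))

theorem integral_cos_mul_sub_mul (hp : Integrable p) (hpeven : ∀ x, p (-x) = p x) (θ y : ℝ) :
    ∫ x, cos (θ * (y - x)) * p x = cos (θ * y) * ∫ x, cos (θ * x) * p x := by
  have hsin : ∫ x, sin (θ * x) * p x = 0 :=
    integral_eq_zero_of_odd fun x => by rw [hpeven, mul_neg, sin_neg, neg_mul]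
  have hcos_int : Integrable (fun x => cos (θ * x) * p x) :=
    hp.bdd_mul (by fun_prop) (.of_forall fun x => abs_cos_le_one _)
  have hsin_int : Integrable (fun x => sin (θ * x) * p x) :=
    hp.bdd_mul (by fun_prop) (.of_forall fun x => abs_sin_le_one _)
  simp_rw [mul_sub, cos_sub, add_mul, mul_assoc]
  rw [integral_add (hcos_int.const_mul _) (hsin_int.const_mul _), integral_const_mul,
    integral_const_mul, hsin, mul_zero, add_zero]

theorem hasDerivAt_integral_comp_sub_mul (hmom : ∀ k : ℕ, Integrable (fun x => x ^ k * p x))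
    {f f' : ℝ → ℝ} (hf : ∀ z, HasDerivAt f (f' z) z) {C : ℝ} {n : ℕ}
    (hf' : ∀ z, |f' z| ≤ C * (1 + z ^ 2) ^ n) {y : ℝ}
    (hint : Integrable (fun x => f (y - x) * p x)) :
    HasDerivAt (fun y => ∫ x, f (y - x) * p x) (∫ x, f' (y - x) * p x) y := by
  have hp : Integrable p := by simpa using hmom 0
  have hf_cont : Continuous f := continuous_iff_continuousAt.2 fun z => (hf z).continuousAt
  have hf'_meas : Measurable f' := (funext fun z => (hf z).deriv) ▸ measurable_deriv f
  have hC : 0 ≤ C := by simpa using (abs_nonneg _).trans (hf' 0)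
  have hdom : ∀ x, ∀ y' ∈ Metric.ball y 1,
      ‖f' (y' - x) * p x‖ ≤ C * 3 ^ n * ‖(1 + (y - x) ^ 2) ^ n * p x‖ := fun x y' hy' => by
    have hyy' : |y' - y| < 1 := hy'
    have hsq : 1 + (y' - x) ^ 2 ≤ 3 * (1 + (y - x) ^ 2) := by
      nlinarith [abs_lt.1 hyy', sq_nonneg (y' - y - (y - x))]
    rw [norm_mul, norm_mul, ← mul_assoc,
      Real.norm_of_nonneg (by positivity : (0 : ℝ) ≤ (1 + (y - x) ^ 2) ^ n)]
    refine mul_le_mul_of_nonneg_right ((hf' _).trans ?_) (norm_nonneg _)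
    rw [mul_assoc, ← mul_pow]
    exact mul_le_mul_of_nonneg_left (pow_le_pow_left₀ (by positivity) hsq n) hC
  refine (hasDerivAt_integral_of_dominated_loc_of_deriv_le (Metric.ball_mem_nhds y one_pos)
    (.of_forall fun y' => ?_) hint ?_ (.of_forall hdom)
    ((integrable_one_add_sub_sq_pow_mul hmom y n).norm.const_mul _)
    (.of_forall fun x y' _ => ((hf (y' - x)).comp_sub_const y' x).mul_const (p x))).2
  · exact (hf_cont.measurable.comp (measurable_const.sub measurable_id)).aestronglyMeasurable.mul
      hp.aestronglyMeasurable
  · exact (hf'_meas.comp (measurable_const.sub measurable_id)).aestronglyMeasurable.mul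
      hp.aestronglyMeasurable

theorem abs_integral_comp_sub_mul_le (hpnonneg : ∀ x, 0 ≤ p x) (hpint : ∫ x, p x = 1)
    {g : ℝ → ℝ} {B : ℝ} (hgB : ∀ z, |g z| ≤ B) (y : ℝ) : |∫ x, g (y - x) * p x| ≤ B := by
  have hp : Integrable p := integrable_of_integral_eq_one hpint
  calc |∫ x, g (y - x) * p x| ≤ ∫ x, B * p x :=
        norm_integral_le_of_norm_le (f := fun x => g (y - x) * p x) (hp.const_mul B)
          (.of_forall fun x => by
            rw [norm_mul, Real.norm_of_nonneg (hpnonneg x)]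
            exact mul_le_mul_of_nonneg_right (hgB _) (hpnonneg x))
    _ = B := by rw [integral_const_mul, hpint, mul_one]

end Moments

theorem div_eq_neg_of_eq_inv_mul_exp {p u : ℝ → ℝ} {Z p' u' y : ℝ}
    (hfix : ∀ y, p y = Z⁻¹ * exp (-u y)) (hZ : Z ≠ 0) (hp : HasDerivAt p p' y)
    (hu : HasDerivAt u u' y) : p' / p y = -u' := by
  have hp' : HasDerivAt p (p y * -u') y := by
    rw [funext hfix] at hp ⊢
    exact (hu.neg.exp.const_mul Z⁻¹).congr_deriv (by simp only [Pi.neg_apply]; ring)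
  have hpy : p y ≠ 0 := by
    rw [hfix]
    exact mul_ne_zero (inv_ne_zero hZ) (exp_ne_zero _)
  rw [hp.unique hp', mul_div_cancel_left₀ _ hpy]

theorem sum_mul_sum_choose_mul_pow_eq {J₁ : ℕ} {a m α : ℕ → ℝ}
    (hα : ∀ j ∈ Icc 1 J₁,
      α j = ∑ k ∈ Icc j J₁, ((2 * k).choose (2 * j) : ℝ) * m (2 * (k - j)) * a k)
    (y : ℝ) :
    ∑ k ∈ Icc 1 J₁,
        a k * ∑ i ∈ range (k + 1), ((2 * k).choose (2 * i) : ℝ) * m (2 * (k - i)) * y ^ (2 * i)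
      = ∑ k ∈ Icc 1 J₁, a k * m (2 * k) + ∑ j ∈ Icc 1 J₁, α j * y ^ (2 * j) := by
  have hsplit : ∀ k,
      ∑ i ∈ range (k + 1), ((2 * k).choose (2 * i) : ℝ) * m (2 * (k - i)) * y ^ (2 * i)
        = m (2 * k)
          + ∑ i ∈ Icc 1 k, ((2 * k).choose (2 * i) : ℝ) * m (2 * (k - i)) * y ^ (2 * i) := by
    intro k
    rw [range_eq_Ico, sum_eq_sum_Ico_succ_bot (by omega : 0 < k + 1), zero_add,
      Ico_add_one_right_eq_Icc]
    simp
  simp_rw [hsplit, mul_add, sum_add_distrib, mul_sum]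
  congr 1
  rw [sum_comm' (t' := Icc 1 J₁) (s' := fun j => Icc j J₁) fun k i => by
    simp only [mem_Icc]
    omega]
  refine sum_congr rfl fun j hj => ?_
  rw [hα j hj, sum_mul]
  exact sum_congr rfl fun k _ => by ring

noncomputable def potential (J₁ J : ℕ) (a θ : ℕ → ℝ) (β : ℝ → ℝ) (y : ℝ) : ℝ :=
  (∑ j ∈ Icc 1 J₁, a j * y ^ (2 * j)) + (∑ j ∈ Icc (J₁ + 1) J, a j * cos (θ j * y)) + β y

noncomputable def potentialDeriv (J₁ J : ℕ) (a θ : ℕ → ℝ) (β' : ℝ → ℝ) (y : ℝ) : ℝ :=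
  (∑ j ∈ Icc 1 J₁, 2 * j * a j * y ^ (2 * j - 1))
    - (∑ j ∈ Icc (J₁ + 1) J, θ j * a j * sin (θ j * y)) + β' y

section Potential

variable {J₁ J : ℕ} {a θ : ℕ → ℝ} {p : ℝ → ℝ}

theorem hasDerivAt_potential {β β' : ℝ → ℝ} {y : ℝ} (hβ : HasDerivAt β (β' y) y) :
    HasDerivAt (potential J₁ J a θ β) (potentialDeriv J₁ J a θ β' y) y := by
  have hpoly : HasDerivAt (fun y => ∑ j ∈ Icc 1 J₁, a j * y ^ (2 * j))
      (∑ j ∈ Icc 1 J₁, 2 * j * a j * y ^ (2 * j - 1)) y :=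
    HasDerivAt.fun_sum fun j _ =>
      ((hasDerivAt_pow (2 * j) y).const_mul (a j)).congr_deriv (by push_cast; ring)
  have htrig : HasDerivAt (fun y => ∑ j ∈ Icc (J₁ + 1) J, a j * cos (θ j * y))
      (-∑ j ∈ Icc (J₁ + 1) J, θ j * a j * sin (θ j * y)) y := by
    rw [← sum_neg_distrib]
    exact HasDerivAt.fun_sum fun j _ =>
      ((((hasDerivAt_id y).const_mul (θ j)).cos).const_mul (a j)).congr_deriv
        (by simp only [id_eq]; ring)
  exact ((hpoly.add htrig).add hβ).congr_deriv (by rw [← sub_eq_add_neg]; rfl)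

theorem abs_potentialDeriv_le {β' : ℝ → ℝ} {B y : ℝ} (hβ' : |β' y| ≤ B) :
    |potentialDeriv J₁ J a θ β' y|
      ≤ 2 * (∑ j ∈ Icc 1 J₁, (j : ℝ) * |a j| * |y| ^ (2 * j - 1))
        + (∑ j ∈ Icc (J₁ + 1) J, |θ j| * |a j|) + B := by
  have hpoly : |∑ j ∈ Icc 1 J₁, 2 * j * a j * y ^ (2 * j - 1)|
      ≤ 2 * ∑ j ∈ Icc 1 J₁, (j : ℝ) * |a j| * |y| ^ (2 * j - 1) := by
    rw [mul_sum]
    refine (abs_sum_le_sum_abs _ _).trans (sum_le_sum fun j _ => le_of_eq ?_)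
    simp only [abs_mul, abs_pow, abs_two, Nat.abs_cast]
    ring
  have htrig : |∑ j ∈ Icc (J₁ + 1) J, θ j * a j * sin (θ j * y)|
      ≤ ∑ j ∈ Icc (J₁ + 1) J, |θ j| * |a j| :=
    (abs_sum_le_sum_abs _ _).trans (sum_le_sum fun j _ => by
      rw [abs_mul, abs_mul]
      exact mul_le_of_le_one_right (by positivity) (abs_sin_le_one _))
  unfold potentialDeriv
  exact (abs_add_le _ _).trans (add_le_add ((abs_sub _ _).trans (add_le_add hpoly htrig)) hβ')

theorem exists_abs_potentialDeriv_le_mul_one_add_sq_pow {β' : ℝ → ℝ} {B : ℝ}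
    (hβ' : ∀ z, |β' z| ≤ B) :
    ∃ C, ∀ z, |potentialDeriv J₁ J a θ β' z| ≤ C * (1 + z ^ 2) ^ (2 * J₁) := by
  refine ⟨2 * (∑ j ∈ Icc 1 J₁, (j : ℝ) * |a j|) + (∑ j ∈ Icc (J₁ + 1) J, |θ j| * |a j|) + B,
    fun z => (abs_potentialDeriv_le (hβ' z)).trans ?_⟩
  have hz : |z| ≤ 1 + z ^ 2 := by nlinarith [sq_abs z, sq_nonneg (|z| - 1)]
  have hw : 1 ≤ (1 + z ^ 2) ^ (2 * J₁) := one_le_pow₀ (by nlinarith)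
  have hpoly : ∑ j ∈ Icc 1 J₁, (j : ℝ) * |a j| * |z| ^ (2 * j - 1)
      ≤ (∑ j ∈ Icc 1 J₁, (j : ℝ) * |a j|) * (1 + z ^ 2) ^ (2 * J₁) := by
    rw [sum_mul]
    gcongr with j hj
    calc |z| ^ (2 * j - 1) ≤ (1 + z ^ 2) ^ (2 * j - 1) := pow_le_pow_left₀ (abs_nonneg z) hz _
      _ ≤ (1 + z ^ 2) ^ (2 * J₁) :=
        pow_le_pow_right₀ (by nlinarith) (by have := (mem_Icc.1 hj).2; omega)
  have htrig := le_mul_of_one_le_right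
    (sum_nonneg fun j _ => by positivity : 0 ≤ ∑ j ∈ Icc (J₁ + 1) J, |θ j| * |a j|) hw
  have hB := le_mul_of_one_le_right ((abs_nonneg _).trans (hβ' 0)) hw
  linear_combination 2 * hpoly + htrig + hB

theorem integrable_potential_comp_sub_mul (hmom : ∀ k : ℕ, Integrable (fun x => x ^ k * p x))
    {β : ℝ → ℝ} (hβ : Measurable β) {C : ℝ} (hβC : ∀ z, |β z| ≤ C) (y : ℝ) :
    Integrable (fun x => potential J₁ J a θ β (y - x) * p x) := by
  have hp : Integrable p := by simpa using hmom 0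
  simp only [potential, add_mul, sum_mul, mul_assoc]
  exact ((integrable_finsetSum _ fun k _ => (integrable_sub_pow_mul_s17 hmom y _).const_mul _).add
    (integrable_finsetSum _ fun j _ => (integrable_comp_sub_mul_of_bounded hp
      (g := fun z => cos (θ j * z)) (by fun_prop) (fun z => abs_cos_le_one _) y).const_mul _)).add
    (integrable_comp_sub_mul_of_bounded hp hβ hβC y)

theorem integral_potential_comp_sub_mul (hpeven : ∀ x, p (-x) = p x)
    (hmom : ∀ k : ℕ, Integrable (fun x => x ^ k * p x)) {m : ℕ → ℝ}
    (hm : ∀ k, m k = ∫ x, x ^ k * p x) {β : ℝ → ℝ} (hβ : Measurable β) {C : ℝ}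
    (hβC : ∀ z, |β z| ≤ C) {α : ℕ → ℝ}
    (hα₁ : ∀ j ∈ Icc 1 J₁,
      α j = ∑ k ∈ Icc j J₁, ((2 * k).choose (2 * j) : ℝ) * m (2 * (k - j)) * a k)
    (hα₂ : ∀ j ∈ Icc (J₁ + 1) J, α j = a j * ∫ x, cos (θ j * x) * p x) (y : ℝ) :
    ∫ x, potential J₁ J a θ β (y - x) * p x
      = ∑ k ∈ Icc 1 J₁, a k * m (2 * k)
        + potential J₁ J α θ (fun y => ∫ x, β (y - x) * p x) y := by
  have hp : Integrable p := by simpa using hmom 0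
  have hpoly : Integrable (fun x => ∑ k ∈ Icc 1 J₁, a k * ((y - x) ^ (2 * k) * p x)) :=
    integrable_finsetSum _ fun k _ => (integrable_sub_pow_mul_s17 hmom y _).const_mul _
  have hcos : ∀ j, Integrable (fun x => cos (θ j * (y - x)) * p x) := fun j =>
    integrable_comp_sub_mul_of_bounded hp (g := fun z => cos (θ j * z)) (by fun_prop)
      (fun z => abs_cos_le_one _) y
  have htrig : Integrable (fun x => ∑ j ∈ Icc (J₁ + 1) J, a j * (cos (θ j * (y - x)) * p x)) :=
    integrable_finsetSum _ fun j _ => (hcos j).const_mul _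
  have hpoly_trig : Integrable (fun x => ∑ k ∈ Icc 1 J₁, a k * ((y - x) ^ (2 * k) * p x)
      + ∑ j ∈ Icc (J₁ + 1) J, a j * (cos (θ j * (y - x)) * p x)) := hpoly.add htrig
  simp only [potential, add_mul, sum_mul, mul_assoc]
  rw [integral_add hpoly_trig (integrable_comp_sub_mul_of_bounded hp hβ hβC y),
    integral_add hpoly htrig,
    integral_finsetSum _ fun k _ => (integrable_sub_pow_mul_s17 hmom y _).const_mul _,
    integral_finsetSum _ fun j _ => (hcos j).const_mul _]
  simp_rw [integral_const_mul, integral_sub_pow_two_mul_mul hpeven hmom,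
    integral_cos_mul_sub_mul hp hpeven, ← hm]
  rw [sum_mul_sum_choose_mul_pow_eq hα₁, sum_congr rfl fun j hj =>
    show a j * (cos (θ j * y) * _) = α j * cos (θ j * y) by rw [hα₂ j hj]; ring]
  ring

theorem hasDerivAt_integral_potential_comp_sub_mul (hpeven : ∀ x, p (-x) = p x)
    (hmom : ∀ k : ℕ, Integrable (fun x => x ^ k * p x)) {m : ℕ → ℝ}
    (hm : ∀ k, m k = ∫ x, x ^ k * p x) {β β' : ℝ → ℝ} (hβ : ∀ z, HasDerivAt β (β' z) z)
    {C C' : ℝ} (hβC : ∀ z, |β z| ≤ C) (hβ'C : ∀ z, |β' z| ≤ C') {α : ℕ → ℝ}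
    (hα₁ : ∀ j ∈ Icc 1 J₁,
      α j = ∑ k ∈ Icc j J₁, ((2 * k).choose (2 * j) : ℝ) * m (2 * (k - j)) * a k)
    (hα₂ : ∀ j ∈ Icc (J₁ + 1) J, α j = a j * ∫ x, cos (θ j * x) * p x) (y : ℝ) :
    HasDerivAt (fun y => ∫ x, potential J₁ J a θ β (y - x) * p x)
      (potentialDeriv J₁ J α θ (fun y => ∫ x, β' (y - x) * p x) y) y := by
  have hp : Integrable p := by simpa using hmom 0
  have hβ_meas : Measurable β :=
    (continuous_iff_continuousAt.2 fun z => (hβ z).continuousAt).measurable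
  rw [funext (integral_potential_comp_sub_mul hpeven hmom hm hβ_meas hβC hα₁ hα₂)]
  exact (hasDerivAt_potential (hasDerivAt_integral_comp_sub_mul hmom hβ (n := 0)
    (by simpa using hβ'C) (integrable_comp_sub_mul_of_bounded hp hβ_meas hβC y))).const_add _

end Potential

theorem log_derivative_bound_general
    (J₁ J : ℕ)
    (θ : ℕ → ℝ) (hθpos : ∀ j ∈ Finset.Icc (J₁+1) J, 0 < θ j)
    (a : ℕ → ℝ)
    (β β' : ℝ → ℝ)
    (hβd : ∀ y, HasDerivAt β (β' y) y)
    (hβbd : ∃ C, ∀ y, |β y| ≤ C) (hβ'bd : ∃ C, ∀ y, |β' y| ≤ C)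
    (φ φd : ℝ → ℝ)
    (hφ : ∀ y, φ y = (∑ j ∈ Finset.Icc 1 J₁, a j * y ^ (2*j))
        + (∑ j ∈ Finset.Icc (J₁+1) J, a j * Real.cos (θ j * y)) + β y)
    (hφd : ∀ y, HasDerivAt φ (φd y) y)
    (p pd : ℝ → ℝ) (hpnonneg : ∀ y, 0 ≤ p y)
    (hpint : ∫ y, p y = 1) (hpeven : ∀ y, p (-y) = p y)
    (hpd : ∀ y, HasDerivAt p (pd y) y)
    (hmom : ∀ k : ℕ, Integrable (fun y => y ^ k * p y))
    (Z : ℝ)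
    (hfix : ∀ y, p y = Z⁻¹ * Real.exp (-∫ s, φ (y - s) * p s))
    (m : ℕ → ℝ) (hm : ∀ k, m k = ∫ y, y ^ k * p y)
    (α : ℕ → ℝ)
    (hα₁ : ∀ j ∈ Finset.Icc 1 J₁,
      α j = ∑ k ∈ Finset.Icc j J₁, (Nat.choose (2*k) (2*j) : ℝ) * m (2*(k-j)) * a k)
    (hα₂ : ∀ j ∈ Finset.Icc (J₁+1) J, α j = a j * ∫ x, Real.cos (θ j * x) * p x)
    (Bβ' : ℝ) (hBβ' : Bβ' = ⨆ y : ℝ, |β' y|) :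
    ∀ y : ℝ,
      |∫ x, φd (y - x) * p x|
          ≤ 2 * (∑ j ∈ Finset.Icc 1 J₁, (j : ℝ) * |α j| * |y| ^ (2 * j - 1))
            + (∑ j ∈ Finset.Icc (J₁+1) J, θ j * |α j|) + Bβ'
      ∧ pd y / p y = -∫ x, φd (y - x) * p x
      ∧ |pd y / p y|
          ≤ 2 * (∑ j ∈ Finset.Icc 1 J₁, (j : ℝ) * |α j| * |y| ^ (2 * j - 1))
            + (∑ j ∈ Finset.Icc (J₁+1) J, θ j * |α j|) + Bβ' := by
  obtain rfl : φ = potential J₁ J a θ β := funext hφ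
  obtain ⟨Cβ, hCβ⟩ := hβbd
  obtain ⟨Cβ', hCβ'⟩ := hβ'bd
  have hβ_meas : Measurable β :=
    (continuous_iff_continuousAt.2 fun z => (hβd z).continuousAt).measurable
  have hβ'_le : ∀ z, |β' z| ≤ Bβ' := fun z =>
    hBβ' ▸ le_ciSup ⟨Cβ', by rintro _ ⟨w, rfl⟩; exact hCβ' w⟩ z
  have hφd_eq : φd = potentialDeriv J₁ J a θ β' :=
    funext fun z => (hφd z).unique (hasDerivAt_potential (hβd z))
  obtain ⟨K, hK⟩ := exists_abs_potentialDeriv_le_mul_one_add_sq_pow (J₁ := J₁) (J := J) (a := a)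
    (θ := θ) hCβ'
  have hv : ∀ y, HasDerivAt (fun y => ∫ x, potential J₁ J a θ β (y - x) * p x)
      (∫ x, φd (y - x) * p x) y := fun y =>
    hasDerivAt_integral_comp_sub_mul hmom hφd (hφd_eq ▸ hK)
      (integrable_potential_comp_sub_mul hmom hβ_meas hCβ y)
  have hZ : Z ≠ 0 := by
    rintro rfl
    simp [show ∀ y, p y = 0 from fun y => by rw [hfix, inv_zero, zero_mul]] at hpint
  intro y
  have hbound := abs_potentialDeriv_le (J₁ := J₁) (J := J) (a := α) (θ := θ)
    (β' := fun y => ∫ x, β' (y - x) * p x) (abs_integral_comp_sub_mul_le hpnonneg hpint hβ'_le y)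
  have hθ_abs : ∑ j ∈ Icc (J₁ + 1) J, |θ j| * |α j| = ∑ j ∈ Icc (J₁ + 1) J, θ j * |α j| :=
    sum_congr rfl fun j hj => by rw [abs_of_pos (hθpos j hj)]
  rw [← (hv y).unique (hasDerivAt_integral_potential_comp_sub_mul hpeven hmom hm hβd hCβ hCβ' hα₁
    hα₂ y), hθ_abs] at hbound
  have hlog : pd y / p y = -∫ x, φd (y - x) * p x :=
    div_eq_neg_of_eq_inv_mul_exp (u := fun y => ∫ x, potential J₁ J a θ β (y - x) * p x) hfix hZ
      (hpd y) (hv y)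
  exact ⟨hbound, hlog, by rwa [hlog, abs_neg]⟩

theorem log_derivative_bound
    (J₁ J : ℕ) (hJ₁ : 1 ≤ J₁) (hJ : J₁ ≤ J)
    (θ : ℕ → ℝ) (hθpos : ∀ j ∈ Finset.Icc (J₁+1) J, 0 < θ j)
    (hθdist : ∀ i ∈ Finset.Icc (J₁+1) J, ∀ j ∈ Finset.Icc (J₁+1) J, i ≠ j → θ i ≠ θ j)
    (a : ℕ → ℝ)
    (β β' β'' : ℝ → ℝ)
    (hβd : ∀ y, HasDerivAt β (β' y) y)
    (hβd2 : ∀ y, HasDerivAt β' (β'' y) y)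
    (hβ''cont : Continuous β'')
    (hβeven : ∀ y, β (-y) = β y)
    (hβbd : ∃ C, ∀ y, |β y| ≤ C) (hβ'bd : ∃ C, ∀ y, |β' y| ≤ C)
    (hβ''bd : ∃ C, ∀ y, |β'' y| ≤ C)
    (hβ'L1 : Integrable β')
    (φ φd : ℝ → ℝ)
    (hφ : ∀ y, φ y = (∑ j ∈ Finset.Icc 1 J₁, a j * y ^ (2*j))
        + (∑ j ∈ Finset.Icc (J₁+1) J, a j * Real.cos (θ j * y)) + β y)
    (hφd : ∀ y, HasDerivAt φ (φd y) y)
    (p pd : ℝ → ℝ) (hpmeas : Measurable p) (hpnonneg : ∀ y, 0 ≤ p y)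
    (hpint : ∫ y, p y = 1) (hpeven : ∀ y, p (-y) = p y)
    (hpd : ∀ y, HasDerivAt p (pd y) y)
    (hmom : ∀ k : ℕ, Integrable (fun y => y ^ k * p y))
    (Z : ℝ) (hZ : Z = ∫ x, Real.exp (-∫ s, φ (x - s) * p s))
    (hfix : ∀ y, p y = Z⁻¹ * Real.exp (-∫ s, φ (y - s) * p s))
    (m : ℕ → ℝ) (hm : ∀ k, m k = ∫ y, y ^ k * p y)
    (α : ℕ → ℝ)
    (hα₁ : ∀ j ∈ Finset.Icc 1 J₁,
      α j = ∑ k ∈ Finset.Icc j J₁, (Nat.choose (2*k) (2*j) : ℝ) * m (2*(k-j)) * a k)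
    (hα₂ : ∀ j ∈ Finset.Icc (J₁+1) J, α j = a j * ∫ x, Real.cos (θ j * x) * p x)
    (Bβ' : ℝ) (hBβ' : Bβ' = ⨆ y : ℝ, |β' y|) :
    ∀ y : ℝ,
      |∫ x, φd (y - x) * p x|
          ≤ 2 * (∑ j ∈ Finset.Icc 1 J₁, (j : ℝ) * |α j| * |y| ^ (2 * j - 1))
            + (∑ j ∈ Finset.Icc (J₁+1) J, θ j * |α j|) + Bβ'
      ∧ pd y / p y = -∫ x, φd (y - x) * p x
      ∧ |pd y / p y|
          ≤ 2 * (∑ j ∈ Finset.Icc 1 J₁, (j : ℝ) * |α j| * |y| ^ (2 * j - 1))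
            + (∑ j ∈ Finset.Icc (J₁+1) J, θ j * |α j|) + Bβ' :=
  log_derivative_bound_general J₁ J θ hθpos a β β' hβd hβbd hβ'bd φ φd hφ hφd p pd hpnonneg hpint
    hpeven hpd hmom Z hfix m hm α hα₁ hα₂ Bβ' hBβ'
end
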